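/- arXiv:math/9912098 — 2 statements merged into one kernel-verified Lean document; each statement's English description precedes it below -/
import Mathlib

section
/- Let Λ be a set equipped with two partial orders ⪯ and ⊑ (write λ ≺ λ' for λ ⪯ λ' with λ ≠ λ'). Let Γ be a finite subset of Λ, let ν be a nonnegative measure (weight function) on Γ, and let A : Λ → (0,∞). Assume that for each γ ∈ Γ and each N > 0 the set {λ ∈ Λ : A(λ) ≤ N and γ ⊑ λ} is finite. Then there exist a subset ℬ ⊆ Λ and a map q : Γ → Λ such that: (1) γ ⊑ q(γ) for all γ ∈ Γ; (2) if q(γ) ∉ ℬ then q(γ) = γ; (3) ∑_{λ∈ℬ} A(λ) ≤ ν(Γ); (4) for every λ ∈ Λ, ν({γ ∈ Γ : q(γ) ≺ λ and γ ⊑ λ}) < A(λ). -/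
/-!
Induct on `Γ`. If every `λ` has `ν{γ ⊑ λ} < A(λ)`, the map `q = id` with `ℬ = ∅` works.
Otherwise the heavy set `{λ : A(λ) ≤ ν{γ ⊑ λ}}` is finite and nonempty, so it has a
`⪯`-maximal element `λ₀`. Send every `γ ⊑ λ₀` to `λ₀`, put `λ₀` into `ℬ`, and recurse on the
remaining points. Heaviness of `λ₀` pays for `A(λ₀)` in the sum over `ℬ`. For `λ₀ ≺ λ`,
maximality makes `λ` light, which is (4) at `λ`. For every other `λ`, the points sent to `λ₀`
do not enter the sum in (4).
-/

open scoped ENNReal Classical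

noncomputable section

theorem IsPartialOrder.exists_maximal {α : Type*} {r : α → α → Prop} (hr : IsPartialOrder α r)
    {s : Set α} (hs : s.Finite) (hne : s.Nonempty) : ∃ a ∈ s, ∀ b ∈ s, r a b → a = b := by
  let : LE α := ⟨r⟩
  have : IsTrans α (· ≤ ·) := ⟨hr.trans⟩
  obtain ⟨a, ha, hmax⟩ := hs.exists_maximal hne
  exact ⟨a, ha, fun b hb hab => hr.antisymm a b hab (hmax hb hab)⟩

theorem Finset.sum_filter_le_sum_filter_of_nonneg {ι : Type*} {s : Finset ι} {f : ι → ℝ}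
    (hf : ∀ i ∈ s, 0 ≤ f i) {p p' : ι → Prop} [DecidablePred p] [DecidablePred p']
    (h : ∀ i ∈ s, p i → p' i) : ∑ i ∈ s with p i, f i ≤ ∑ i ∈ s with p' i, f i :=
  Finset.sum_le_sum_of_subset_of_nonneg (Finset.monotone_filter_right s h)
    fun i hi _ => hf i (Finset.mem_of_mem_filter i hi)

section StoppingTime

variable {Λ : Type*} (le1 le2 : Λ → Λ → Prop) (ν A : Λ → ℝ)

def massBelow (Γ : Finset Λ) (l : Λ) : ℝ := ∑ γ ∈ Γ with le2 γ l, ν γ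

structure IsStoppingDecomposition (Γ : Finset Λ) (B : Set Λ) (q : Λ → Λ) : Prop where
  le2_apply : ∀ γ ∈ Γ, le2 γ (q γ)
  eq_of_notMem : ∀ γ ∈ Γ, q γ ∉ B → q γ = γ
  tsum_le : (∑' l : B, ENNReal.ofReal (A l)) ≤ ENNReal.ofReal (∑ γ ∈ Γ, ν γ)
  sum_lt : ∀ l : Λ, ∑ γ ∈ Γ with le1 (q γ) l ∧ q γ ≠ l ∧ le2 γ l, ν γ < A l

variable {le1 le2 ν A} {Γ : Finset Λ}

theorem massBelow_le_sum (hν : ∀ γ ∈ Γ, 0 ≤ ν γ) (l : Λ) :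
    massBelow le2 ν Γ l ≤ ∑ γ ∈ Γ, ν γ :=
  Finset.sum_le_sum_of_subset_of_nonneg (Finset.filter_subset _ _)
    fun γ hγ _ => hν γ hγ

theorem exists_le2_of_le_massBelow (hA : ∀ l, 0 < A l) {l : Λ}
    (hl : A l ≤ massBelow le2 ν Γ l) : ∃ γ ∈ Γ, le2 γ l := by
  by_contra! h
  have : massBelow le2 ν Γ l = 0 := Finset.sum_eq_zero fun γ hγ =>
    absurd (Finset.mem_filter.1 hγ).2 (h γ (Finset.mem_of_mem_filter γ hγ))
  exact (hA l).not_ge (hl.trans_eq this)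

theorem finite_setOf_le_massBelow (hν : ∀ γ ∈ Γ, 0 ≤ ν γ) (hA : ∀ l, 0 < A l)
    (hfin : ∀ γ ∈ Γ, ∀ N : ℝ, 0 < N → {l : Λ | A l ≤ N ∧ le2 γ l}.Finite) :
    {l : Λ | A l ≤ massBelow le2 ν Γ l}.Finite := by
  have hN : 0 < ∑ γ ∈ Γ, ν γ + 1 := by linarith [Finset.sum_nonneg hν]
  refine (Γ.finite_toSet.biUnion fun γ hγ => hfin γ hγ _ hN).subset fun l (hl : A l ≤ _) => ?_
  obtain ⟨γ, hγ, hγl⟩ := exists_le2_of_le_massBelow hA hl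
  exact Set.mem_biUnion hγ ⟨by linarith [massBelow_le_sum (le2 := le2) hν l], hγl⟩

theorem isStoppingDecomposition_empty_id (h2 : IsPartialOrder Λ le2)
    (hν : ∀ γ ∈ Γ, 0 ≤ ν γ) (hlight : ∀ l, massBelow le2 ν Γ l < A l) :
    IsStoppingDecomposition le1 le2 ν A Γ ∅ id where
  le2_apply γ _ := h2.refl γ
  eq_of_notMem _ _ _ := rfl
  tsum_le := by simp
  sum_lt l := (Finset.sum_filter_le_sum_filter_of_nonneg hν fun _ _ h => h.2.2).trans_lt
    (hlight l)

theorem tsum_insert_ofReal_le {l₀ : Λ} {B : Set Λ} {S S' : ℝ} (hA : 0 < A l₀) (hS' : 0 ≤ S')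
    (hB : (∑' l : B, ENNReal.ofReal (A l)) ≤ ENNReal.ofReal S') (hl₀ : A l₀ + S' ≤ S) :
    (∑' l : ↥(insert l₀ B), ENNReal.ofReal (A l)) ≤ ENNReal.ofReal S :=
  calc (∑' l : ↥(insert l₀ B), ENNReal.ofReal (A l))
      ≤ ENNReal.ofReal (A l₀) + ∑' l : B, ENNReal.ofReal (A l) := by
        rw [← Set.singleton_union]
        simpa using ENNReal.tsum_union_le (fun l => ENNReal.ofReal (A l)) {l₀} B
    _ ≤ ENNReal.ofReal (A l₀) + ENNReal.ofReal S' := by gcongr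
    _ = ENNReal.ofReal (A l₀ + S') := (ENNReal.ofReal_add hA.le hS').symm
    _ ≤ ENNReal.ofReal S := ENNReal.ofReal_le_ofReal hl₀

theorem IsStoppingDecomposition.insert_of_maximal (hν : ∀ γ ∈ Γ, 0 ≤ ν γ)
    (hA : ∀ l, 0 < A l) {l₀ : Λ} (hl₀ : A l₀ ≤ massBelow le2 ν Γ l₀)
    (hmax : ∀ l, A l ≤ massBelow le2 ν Γ l → le1 l₀ l → l₀ = l) {B : Set Λ} {q : Λ → Λ}
    (h : IsStoppingDecomposition le1 le2 ν A (Γ.filter fun γ => ¬ le2 γ l₀) B q) :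
    IsStoppingDecomposition le1 le2 ν A Γ (insert l₀ B)
      (fun γ => if le2 γ l₀ then l₀ else q γ) where
  le2_apply γ hγ := by
    by_cases hγl₀ : le2 γ l₀
    · simp [hγl₀]
    · simpa [hγl₀] using h.le2_apply γ (Finset.mem_filter.2 ⟨hγ, hγl₀⟩)
  eq_of_notMem γ hγ hB := by
    by_cases hγl₀ : le2 γ l₀
    · simp [hγl₀] at hB
    · simp only [hγl₀, if_false] at hB ⊢
      exact h.eq_of_notMem γ (Finset.mem_filter.2 ⟨hγ, hγl₀⟩)
        fun hm => hB (Set.mem_insert_of_mem _ hm)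
  tsum_le := tsum_insert_ofReal_le (hA l₀)
    (Finset.sum_nonneg fun γ hγ => hν γ (Finset.mem_of_mem_filter γ hγ)) h.tsum_le <| by
      rw [← Finset.sum_filter_add_sum_filter_not Γ (fun γ => le2 γ l₀)]
      exact add_le_add_left hl₀ _
  sum_lt l := by
    by_cases hl : le1 l₀ l ∧ l₀ ≠ l
    · have hlight : massBelow le2 ν Γ l < A l :=
        lt_of_not_ge fun hheavy => hl.2 (hmax l hheavy hl.1)
      exact (Finset.sum_filter_le_sum_filter_of_nonneg hν fun _ _ h => h.2.2).trans_lt hlight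
    · refine lt_of_le_of_lt ?_ (h.sum_lt l)
      rw [Finset.filter_filter]
      refine Finset.sum_filter_le_sum_filter_of_nonneg hν fun γ _ hγ => ?_
      by_cases hγl₀ : le2 γ l₀
      · simp only [hγl₀, if_true] at hγ
        exact absurd ⟨hγ.1, hγ.2.1⟩ hl
      · simpa [hγl₀] using hγ

theorem exists_isStoppingDecomposition (h1 : IsPartialOrder Λ le1)
    (h2 : IsPartialOrder Λ le2) (hν : ∀ γ ∈ Γ, 0 ≤ ν γ) (hA : ∀ l, 0 < A l)
    (hfin : ∀ γ ∈ Γ, ∀ N : ℝ, 0 < N → {l : Λ | A l ≤ N ∧ le2 γ l}.Finite) :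
    ∃ B q, IsStoppingDecomposition le1 le2 ν A Γ B q := by
  induction Γ using Finset.strongInduction with
  | H Γ ih =>
  by_cases hlight : ∀ l, massBelow le2 ν Γ l < A l
  · exact ⟨∅, id, isStoppingDecomposition_empty_id h2 hν hlight⟩
  push Not at hlight
  obtain ⟨l₀, hl₀, hmax⟩ := h1.exists_maximal (finite_setOf_le_massBelow hν hA hfin) hlight
  obtain ⟨γ₀, hγ₀, hγ₀l₀⟩ := exists_le2_of_le_massBelow hA hl₀
  have hsub : Γ.filter (fun γ => ¬ le2 γ l₀) ⊂ Γ :=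
    Finset.filter_ssubset.2 ⟨γ₀, hγ₀, not_not.2 hγ₀l₀⟩
  obtain ⟨B, q, hBq⟩ := ih _ hsub (fun γ hγ => hν γ (Finset.mem_of_mem_filter γ hγ))
    (fun γ hγ => hfin γ (Finset.mem_of_mem_filter γ hγ))
  exact ⟨_, _, hBq.insert_of_maximal hν hA hl₀ hmax⟩

end StoppingTime

/-- **Lemma 3.1** (abstract Calderón–Zygmund stopping time construction).
Let `⪯` (`le1`) and `⊑` (`le2`) be partial orders on a set `Λ`, let `Γ` be a finite
subset of `Λ` with a nonnegative weight `ν`, and let `A : Λ → (0,∞)`.  Assume that for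
each `γ ∈ Γ` and `N > 0` the set `{λ : A(λ) ≤ N, γ ⊑ λ}` is finite.  Then there are a
subset `ℬ ⊆ Λ` and a map `q : Γ → Λ` such that: (1) `γ ⊑ q(γ)`; (2) `q(γ) ∉ ℬ` implies
`q(γ) = γ`; (3) `∑_{λ∈ℬ} A(λ) ≤ ν(Γ)`; (4) for all `λ ∈ Λ`,
`ν{γ ∈ Γ : q(γ) ≺ λ, γ ⊑ λ} < A(λ)`. -/
theorem statement10 {Λ : Type*}
    (le1 le2 : Λ → Λ → Prop)
    (h1 : IsPartialOrder Λ le1) (h2 : IsPartialOrder Λ le2)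
    (Γ : Finset Λ) (ν : Λ → ℝ) (hν : ∀ γ ∈ Γ, 0 ≤ ν γ)
    (A : Λ → ℝ) (hA : ∀ l, 0 < A l)
    (hfin : ∀ γ ∈ Γ, ∀ N : ℝ, 0 < N → {l : Λ | A l ≤ N ∧ le2 γ l}.Finite) :
    ∃ (B : Set Λ) (q : Λ → Λ),
      (∀ γ ∈ Γ, le2 γ (q γ)) ∧
      (∀ γ ∈ Γ, q γ ∉ B → q γ = γ) ∧
      (∑' l : B, ENNReal.ofReal (A l)) ≤ ENNReal.ofReal (∑ γ ∈ Γ, ν γ) ∧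
      (∀ l : Λ,
        ∑ γ ∈ Γ.filter (fun γ => le1 (q γ) l ∧ q γ ≠ l ∧ le2 γ l), ν γ < A l) := by
  obtain ⟨B, q, h⟩ := exists_isStoppingDecomposition h1 h2 hν hA hfin
  exact ⟨B, q, h.le2_apply, h.eq_of_notMem, h.tsum_le, h.sum_lt⟩
end
end

section
/- Let {I} be a finite collection of dyadic cubes in ℝ^d with nonnegative coefficients c_I satisfying ∑_I c_I ≤ 1, and set F = ∑_I c_I χ_I/|I|. Let α > 0 and let 𝒥 be a collection of pairwise disjoint dyadic cubes J such that ∑_{J∈𝒥} |J| ≤ C₁ α, ∫_J F(x) dx ≤ C₁ α |J| for each J ∈ 𝒥, the average of F over every dyadic cube not contained in any J ∈ 𝒥 is at most α, and F(x) ≤ C₁ α for a.e. x ∉ ∪_{J∈𝒥} J. For each dyadic cube I define t_I = 0 if I is contained in no J ∈ 𝒥, and otherwise t_I ≥ 0 so that the sidelength of the cube J ∈ 𝒥 containing I equals 2^{t_I} times the sidelength of I. Then ‖∑_I c_I χ_{2^{t_I}I}/|2^{t_I}I|‖_{L^2(ℝ^d)} ≤ C α^{1/2}, with C depending only on d and C₁.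 -/
/-!
Write `E_I = 2^{t_I} I` and `a_I = c_I / |E_I|`. Expanding the square,
`‖∑ a_I χ_{E_I}‖₂² = ∑_{I,I'} a_I a_{I'} |E_I ∩ E_{I'}|`, and by symmetry it suffices to sum over
pairs with `ℓ(E_{I'}) ≤ ℓ(E_I)`, where `|E_I ∩ E_{I'}| ≤ |E_{I'}|`. If `E_I` has sidelength `2^k`,
every such `I'` with `E_{I'}` meeting `E_I` lies in one of the `3^d` dyadic cubes of scale `k`
adjacent to the ancestor of `I` at that scale. The cubes `I'` inside a dyadic cube `Q` whose scale
is at least their stopping scale carry mass at most `∫_Q F ≤ max(1, C₁) α |Q|`: either `Q` lies in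
no stopping cube, or `Q` is itself the stopping cube `J`. Summing over `I` gives
`‖·‖₂² ≤ 2 · 3^d · max(1, C₁) · α · ∑ c_I`.
-/

open MeasureTheory Filter Set Real
open scoped ENNReal NNReal Topology

noncomputable section

abbrev Rd (d : ℕ) := EuclideanSpace ℝ (Fin d)

/-- The index of a dyadic cube: a scale `k ∈ ℤ` and a position `z ∈ ℤ^d`. -/
abbrev CubeIdx (d : ℕ) := ℤ × (Fin d → ℤ)

/-- The dyadic cube of sidelength `2^k` at position `z`. -/
def dyadic (d : ℕ) (I : CubeIdx d) : Set (Rd d) :=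
  {x : Rd d | ∀ i : Fin d, x i ∈ Set.Ico ((I.2 i : ℝ) * (2:ℝ) ^ I.1)
    ((I.2 i + 1 : ℝ) * (2:ℝ) ^ I.1)}

/-- The cube `2^t I`: same center as `I`, sidelength `2^t` times that of `I`. -/
def expand (d : ℕ) (I : CubeIdx d) (t : ℕ) : Set (Rd d) :=
  {x : Rd d | ∀ i : Fin d,
    |x i - ((I.2 i : ℝ) + 1/2) * (2:ℝ) ^ I.1| ≤ (2:ℝ) ^ (t : ℤ) * (2:ℝ) ^ I.1 / 2}

/-- The measure of a dyadic cube of scale `k`, namely `2^{kd}`. -/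
def cubeVol (d : ℕ) (k : ℤ) : ℝ := (2:ℝ) ^ (k * (d:ℤ))

lemma cubeVol_pos (d : ℕ) (k : ℤ) : 0 < cubeVol d k := zpow_pos two_pos _

lemma ofReal_two_zpow_pow (d : ℕ) (k : ℤ) :
    ENNReal.ofReal ((2:ℝ) ^ k) ^ d = ENNReal.ofReal (cubeVol d k) := by
  rw [← ENNReal.ofReal_pow (zpow_pos two_pos k).le, cubeVol, zpow_mul, zpow_natCast]

lemma volume_ofLp_preimage_pi {ι : Type*} [Fintype ι] {s : ι → Set ℝ}
    (hs : ∀ i, MeasurableSet (s i)) :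
    volume (WithLp.ofLp ⁻¹' univ.pi s : Set (EuclideanSpace ℝ ι)) = ∏ i, volume (s i) := by
  rw [(PiLp.volume_preserving_ofLp ι).measure_preimage (MeasurableSet.univ_pi hs).nullMeasurableSet,
    volume_pi_pi]

section Geometry

variable {d : ℕ}

lemma dyadic_eq_preimage (I : CubeIdx d) :
    dyadic d I = WithLp.ofLp ⁻¹'
      univ.pi fun i => Ico ((I.2 i : ℝ) * 2 ^ I.1) ((I.2 i + 1 : ℝ) * 2 ^ I.1) := by
  ext x
  simp only [dyadic, mem_preimage, mem_univ_pi, mem_ofPred_eq]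

lemma expand_eq_preimage (I : CubeIdx d) (t : ℕ) :
    expand d I t = WithLp.ofLp ⁻¹' univ.pi fun i =>
      Icc (((I.2 i : ℝ) + 1/2) * 2 ^ I.1 - (2:ℝ) ^ (t:ℤ) * 2 ^ I.1 / 2)
        (((I.2 i : ℝ) + 1/2) * 2 ^ I.1 + (2:ℝ) ^ (t:ℤ) * 2 ^ I.1 / 2) := by
  ext x
  simp only [expand, mem_preimage, mem_univ_pi, mem_ofPred_eq]
  exact forall_congr' fun i => by rw [abs_sub_comm, mem_Icc_iff_abs_le]

lemma measurableSet_dyadic (I : CubeIdx d) : MeasurableSet (dyadic d I) := by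
  rw [dyadic_eq_preimage]
  exact (PiLp.volume_preserving_ofLp _).measurable
    (MeasurableSet.univ_pi fun _ => measurableSet_Ico)

lemma measurableSet_expand (I : CubeIdx d) (t : ℕ) : MeasurableSet (expand d I t) := by
  rw [expand_eq_preimage]
  exact (PiLp.volume_preserving_ofLp _).measurable
    (MeasurableSet.univ_pi fun _ => measurableSet_Icc)

lemma volume_dyadic (I : CubeIdx d) :
    volume (dyadic d I) = ENNReal.ofReal (cubeVol d I.1) := by
  rw [dyadic_eq_preimage, volume_ofLp_preimage_pi fun _ => measurableSet_Ico]
  simp_rw [Real.volume_Ico, ← sub_mul, add_sub_cancel_left, one_mul]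
  rw [Finset.prod_const, Finset.card_univ, Fintype.card_fin, ofReal_two_zpow_pow]

lemma volume_expand (I : CubeIdx d) (t : ℕ) :
    volume (expand d I t) = ENNReal.ofReal (cubeVol d (I.1 + t)) := by
  rw [expand_eq_preimage, volume_ofLp_preimage_pi fun _ => measurableSet_Icc]
  have hlen : ∀ i : Fin d, volume (Icc (((I.2 i : ℝ) + 1/2) * 2 ^ I.1 - (2:ℝ) ^ (t:ℤ) * 2 ^ I.1 / 2)
      (((I.2 i : ℝ) + 1/2) * 2 ^ I.1 + (2:ℝ) ^ (t:ℤ) * 2 ^ I.1 / 2)) =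
      ENNReal.ofReal ((2:ℝ) ^ (I.1 + t)) := fun i => by
    rw [Real.volume_Icc, add_sub_sub_cancel, add_halves, ← zpow_add₀ two_ne_zero, add_comm]
  simp_rw [hlen]
  rw [Finset.prod_const, Finset.card_univ, Fintype.card_fin, ofReal_two_zpow_pow]

lemma volume_expand_ne_top (I : CubeIdx d) (t : ℕ) : volume (expand d I t) ≠ ⊤ :=
  (volume_expand I t).trans_ne ENNReal.ofReal_ne_top

lemma measureReal_dyadic (I : CubeIdx d) : volume.real (dyadic d I) = cubeVol d I.1 := by
  rw [measureReal_def, volume_dyadic, ENNReal.toReal_ofReal (cubeVol_pos d _).le]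

lemma measureReal_expand (I : CubeIdx d) (t : ℕ) :
    volume.real (expand d I t) = cubeVol d (I.1 + t) := by
  rw [measureReal_def, volume_expand, ENNReal.toReal_ofReal (cubeVol_pos d _).le]

lemma mem_dyadic_iff {x : Rd d} {I : CubeIdx d} :
    x ∈ dyadic d I ↔ ∀ i, ⌊x i / 2 ^ I.1⌋ = I.2 i := by
  have h := zpow_pos (two_pos : (0:ℝ) < 2) I.1
  simp only [dyadic, mem_ofPred_eq, mem_Ico, Int.floor_eq_iff, le_div_iff₀ h, div_lt_iff₀ h]

lemma center_mem_dyadic (I : CubeIdx d) :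
    (WithLp.toLp 2 fun i => ((I.2 i : ℝ) + 1/2) * 2 ^ I.1 : Rd d) ∈ dyadic d I := by
  intro i
  have h := zpow_pos (two_pos : (0:ℝ) < 2) I.1
  constructor <;> dsimp only <;> nlinarith

lemma eq_of_dyadic_subset {Q J : CubeIdx d} (hk : Q.1 = J.1) (h : dyadic d Q ⊆ dyadic d J) :
    Q = J := by
  have hQ := mem_dyadic_iff.1 (center_mem_dyadic Q)
  have hJ := mem_dyadic_iff.1 (h (center_mem_dyadic Q))
  exact Prod.ext hk (funext fun i => by rw [← hQ i, ← hJ i, hk])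

/-- The dyadic cube of scale `k` containing `I`; junk when `k < I.1`. -/
def dyadicAncestor (k : ℤ) (I : CubeIdx d) : CubeIdx d :=
  (k, fun i => I.2 i / 2 ^ (k - I.1).toNat)

lemma dyadic_subset_dyadicAncestor {k : ℤ} {I : CubeIdx d} (h : I.1 ≤ k) :
    dyadic d I ⊆ dyadic d (dyadicAncestor k I) := by
  intro x hx
  rw [mem_dyadic_iff] at hx ⊢
  intro i
  have hk : (2:ℝ) ^ k = 2 ^ I.1 * ((2 ^ (k - I.1).toNat : ℕ) : ℝ) := by
    rw [Nat.cast_pow, Nat.cast_ofNat, ← zpow_natCast, ← zpow_add₀ two_ne_zero]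
    congr 1
    omega
  show ⌊x i / 2 ^ k⌋ = I.2 i / 2 ^ (k - I.1).toNat
  rw [hk, ← div_div, Int.floor_div_natCast, hx i]
  simp

lemma abs_floor_sub_floor_le_one {u v : ℝ} (h : |u - v| ≤ 1) : |⌊u⌋ - ⌊v⌋| ≤ 1 := by
  rw [abs_le] at h
  have h₁ : ⌊u⌋ ≤ ⌊v⌋ + 1 := by
    rw [← Int.floor_add_one]; exact Int.floor_mono (by linarith)
  have h₂ : ⌊v⌋ ≤ ⌊u⌋ + 1 := by
    rw [← Int.floor_add_one]; exact Int.floor_mono (by linarith)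
  rw [abs_le]
  constructor <;> linarith

lemma abs_sub_center_le_of_mem_expand {I : CubeIdx d} {t : ℕ} {k : ℤ} (hk : I.1 + t ≤ k)
    {x : Rd d} (hx : x ∈ expand d I t) (i : Fin d) :
    |x i - ((I.2 i : ℝ) + 1/2) * 2 ^ I.1| ≤ 2 ^ k / 2 := by
  refine (hx i).trans ?_
  rw [← zpow_add₀ two_ne_zero]
  gcongr
  · norm_num
  · omega

lemma abs_sub_dyadicAncestor_le_one {I I' : CubeIdx d} {t t' : ℕ} {k : ℤ}
    (hI : I.1 + t ≤ k) (hI' : I'.1 + t' ≤ k) (hmeet : (expand d I t ∩ expand d I' t').Nonempty)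
    (i : Fin d) : |(dyadicAncestor k I).2 i - (dyadicAncestor k I').2 i| ≤ 1 := by
  obtain ⟨x, hx, hx'⟩ := hmeet
  have hc := mem_dyadic_iff.1
    (dyadic_subset_dyadicAncestor (k := k) (by omega) (center_mem_dyadic I))
  have hc' := mem_dyadic_iff.1
    (dyadic_subset_dyadicAncestor (k := k) (by omega) (center_mem_dyadic I'))
  rw [← hc i, ← hc' i]
  simp only [dyadicAncestor]
  apply abs_floor_sub_floor_le_one
  have h := zpow_pos (two_pos : (0:ℝ) < 2) k
  have h₁ := abs_sub_center_le_of_mem_expand hI hx i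
  have h₂ := abs_sub_center_le_of_mem_expand hI' hx' i
  rw [← sub_div, abs_div, abs_of_pos h, div_le_one h]
  rw [abs_le] at h₁ h₂ ⊢
  constructor <;> linarith

end Geometry

lemma mul_indicator_one_div {α : Type*} (s : Set α) (a b : ℝ) (x : α) :
    a * s.indicator (fun _ => 1) x / b = s.indicator (fun _ => a / b) x := by
  by_cases hx : x ∈ s <;> simp [hx]

section IndicatorSums

variable {X ι : Type*} [MeasurableSpace X] {μ : Measure X} {E : ι → Set X}

lemma sum_mul_measureReal_le_setIntegral {S T : Finset ι} (hTS : T ⊆ S)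
    (hE : ∀ i, MeasurableSet (E i)) (hfin : ∀ i, μ (E i) ≠ ⊤) {a : ι → ℝ} (ha : ∀ i, 0 ≤ a i)
    {s : Set X} (hTs : ∀ i ∈ T, E i ⊆ s) :
    ∑ i ∈ T, a i * μ.real (E i) ≤ ∫ x in s, ∑ i ∈ S, (E i).indicator (fun _ => a i) x ∂μ := by
  rw [integral_finsetSum S fun i _ => ((integrable_indicator_iff (hE i)).2
    (integrableOn_const (C := a i) (hfin i))).integrableOn]
  simp_rw [integral_indicator_const _ (hE _), measureReal_restrict_apply (hE _), smul_eq_mul]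
  calc ∑ i ∈ T, a i * μ.real (E i) = ∑ i ∈ T, μ.real (E i ∩ s) * a i :=
        Finset.sum_congr rfl fun i hi => by rw [inter_eq_left.2 (hTs i hi), mul_comm]
    _ ≤ ∑ i ∈ S, μ.real (E i ∩ s) * a i :=
        Finset.sum_le_sum_of_subset_of_nonneg hTS fun i _ _ => mul_nonneg measureReal_nonneg (ha i)

lemma eLpNorm_two_sum_indicator (S : Finset ι) (hE : ∀ i, MeasurableSet (E i))
    (hfin : ∀ i, μ (E i) ≠ ⊤) (a : ι → ℝ) :
    eLpNorm (fun x => ∑ i ∈ S, (E i).indicator (fun _ => a i) x) 2 μ =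
      ENNReal.ofReal √(∑ i ∈ S, ∑ j ∈ S, a i * a j * μ.real (E i ∩ E j)) := by
  have hmem : MemLp (fun x => ∑ i ∈ S, (E i).indicator (fun _ => a i) x) 2 μ :=
    memLp_finsetSum S fun i _ => memLp_indicator_const 2 (hE i) (a i) (Or.inr (hfin i))
  have hsq : ∀ x, (∑ i ∈ S, (E i).indicator (fun _ => a i) x) ^ 2 =
      ∑ i ∈ S, ∑ j ∈ S, (E i ∩ E j).indicator (fun _ => a i * a j) x := fun x => by
    simp_rw [sq, Finset.sum_mul_sum, Set.inter_indicator_mul]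
  have hint : ∀ i j, Integrable ((E i ∩ E j).indicator fun _ => a i * a j) μ := fun i j =>
    (integrable_indicator_iff ((hE i).inter (hE j))).2
      (integrableOn_const (C := a i * a j) (measure_ne_top_of_subset inter_subset_left (hfin i)))
  rw [hmem.eLpNorm_eq_integral_rpow_norm two_ne_zero ENNReal.ofNat_ne_top, Real.sqrt_eq_rpow]
  simp_rw [ENNReal.toReal_ofNat, Real.rpow_two, Real.norm_eq_abs, sq_abs, hsq]
  rw [integral_finsetSum S fun i _ => integrable_finsetSum S fun j _ => hint i j]
  simp_rw [integral_finsetSum S fun j _ => hint _ j,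
    integral_indicator_const _ ((hE _).inter (hE _)), smul_eq_mul, mul_comm (μ.real _)]
  norm_num

end IndicatorSums

lemma sum_sum_le_two_mul_sum_sum_filter_le {ι β : Type*} [LinearOrder β] (S : Finset ι)
    (κ : ι → β) {p : ι → ι → ℝ} (hp : ∀ i j, 0 ≤ p i j) (hsymm : ∀ i j, p i j = p j i) :
    ∑ i ∈ S, ∑ j ∈ S, p i j ≤ 2 * ∑ i ∈ S, ∑ j ∈ S with κ j ≤ κ i, p i j := by
  have hswap : ∑ i ∈ S, ∑ j ∈ S with κ i ≤ κ j, p i j = ∑ i ∈ S, ∑ j ∈ S with κ j ≤ κ i, p i j := by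
    simp_rw [Finset.sum_filter]
    rw [Finset.sum_comm]
    simp_rw [hsymm _]
  calc ∑ i ∈ S, ∑ j ∈ S, p i j
      = ∑ i ∈ S, (∑ j ∈ S with κ j ≤ κ i, p i j + ∑ j ∈ S with ¬ κ j ≤ κ i, p i j) := by
        simp_rw [Finset.sum_filter_add_sum_filter_not]
    _ ≤ ∑ i ∈ S, (∑ j ∈ S with κ j ≤ κ i, p i j + ∑ j ∈ S with κ i ≤ κ j, p i j) := by
        gcongr with i _ j
        · exact fun j _ _ => hp i j
        · exact le_of_not_ge
    _ = 2 * ∑ i ∈ S, ∑ j ∈ S with κ j ≤ κ i, p i j := by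
        rw [Finset.sum_add_distrib, hswap, two_mul]

section StoppingTimes

open scoped Classical

variable {d : ℕ} {S : Finset (CubeIdx d)} {c : CubeIdx d → ℝ} {t : CubeIdx d → ℕ}

lemma sum_coeff_le_of_stoppingTimes {C₁ α : ℝ} (hα : 0 ≤ α) (hc : ∀ I, 0 ≤ c I)
    {𝒥 : Finset (CubeIdx d)}
    (hJ : ∀ J ∈ 𝒥, ∫ x in dyadic d J,
        (∑ I ∈ S, c I * (dyadic d I).indicator (fun _ => 1) x / cubeVol d I.1)
      ≤ C₁ * α * cubeVol d J.1)
    (hgood : ∀ Q : CubeIdx d, (¬ ∃ J ∈ 𝒥, dyadic d Q ⊆ dyadic d J) →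
      ∫ x in dyadic d Q,
        (∑ I ∈ S, c I * (dyadic d I).indicator (fun _ => 1) x / cubeVol d I.1)
      ≤ α * cubeVol d Q.1)
    (ht : ∀ I, ∀ J ∈ 𝒥, dyadic d I ⊆ dyadic d J → J.1 = I.1 + (t I : ℤ)) (Q : CubeIdx d) :
    ∑ I ∈ S with I.1 + (t I : ℤ) ≤ Q.1 ∧ dyadic d I ⊆ dyadic d Q, c I
      ≤ max 1 C₁ * α * cubeVol d Q.1 := by
  set T := S.filter fun I => I.1 + (t I : ℤ) ≤ Q.1 ∧ dyadic d I ⊆ dyadic d Q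
  have hmass : ∑ I ∈ T, c I ≤ ∫ x in dyadic d Q,
      (∑ I ∈ S, c I * (dyadic d I).indicator (fun _ => 1) x / cubeVol d I.1) := by
    simp_rw [mul_indicator_one_div]
    convert sum_mul_measureReal_le_setIntegral (μ := volume) (E := dyadic d)
      (a := fun I => c I / cubeVol d I.1) (Finset.filter_subset _ S) measurableSet_dyadic
      (fun I => (volume_dyadic I).trans_ne ENNReal.ofReal_ne_top)
      (fun I => div_nonneg (hc I) (cubeVol_pos d _).le)
      (fun I (hI : I ∈ T) => (Finset.mem_filter.1 hI).2.2) using 2 with I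
    rw [measureReal_dyadic, div_mul_cancel₀ _ (cubeVol_pos d _).ne']
  have hvol := cubeVol_pos d Q.1
  by_cases hQ : ∃ J ∈ 𝒥, dyadic d Q ⊆ dyadic d J
  · obtain ⟨J, hJ𝒥, hQJ⟩ := hQ
    rcases T.eq_empty_or_nonempty with hT | ⟨I, hI⟩
    · rw [hT, Finset.sum_empty]
      have := le_max_left 1 C₁
      positivity
    · obtain ⟨-, hIQ, hIJ⟩ := Finset.mem_filter.1 hI
      -- `J` is the stopping cube of both `I` and `Q`, which squeezes its scale to that of `Q`.
      have hscale : Q.1 = J.1 := by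
        have := ht I J hJ𝒥 (hIJ.trans hQJ)
        have := ht Q J hJ𝒥 hQJ
        omega
      obtain rfl := eq_of_dyadic_subset hscale hQJ
      calc _ ≤ _ := hmass
        _ ≤ C₁ * α * cubeVol d Q.1 := hJ Q hJ𝒥
        _ ≤ _ := by gcongr; exact le_max_right 1 C₁
  · calc _ ≤ _ := hmass
      _ ≤ α * cubeVol d Q.1 := hgood Q hQ
      _ ≤ _ := by
        rw [mul_assoc]
        exact le_mul_of_one_le_left (by positivity) (le_max_left 1 C₁)

variable {A : ℝ}

lemma sum_coeff_expand_meets_le (hc : ∀ I, 0 ≤ c I)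
    (hmass : ∀ Q : CubeIdx d,
      ∑ I ∈ S with I.1 + (t I : ℤ) ≤ Q.1 ∧ dyadic d I ⊆ dyadic d Q, c I ≤ A * cubeVol d Q.1)
    (I₀ : CubeIdx d) :
    ∑ I ∈ S with I.1 + (t I : ℤ) ≤ I₀.1 + t I₀ ∧
        (expand d I (t I) ∩ expand d I₀ (t I₀)).Nonempty, c I
      ≤ 3 ^ d * (A * cubeVol d (I₀.1 + t I₀)) := by
  set k := I₀.1 + (t I₀ : ℤ)
  set Z := Fintype.piFinset fun i =>
    Finset.Icc ((dyadicAncestor k I₀).2 i - 1) ((dyadicAncestor k I₀).2 i + 1)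
  have hmaps : ∀ I ∈ S.filter fun I => I.1 + (t I : ℤ) ≤ k ∧
      (expand d I (t I) ∩ expand d I₀ (t I₀)).Nonempty, (dyadicAncestor k I).2 ∈ Z := by
    intro I hI
    obtain ⟨-, hIk, hmeet⟩ := Finset.mem_filter.1 hI
    simp only [Z, Fintype.mem_piFinset, Finset.mem_Icc]
    intro i
    have := abs_le.1 (abs_sub_dyadicAncestor_le_one hIk le_rfl hmeet i)
    omega
  have hcard : Z.card = 3 ^ d := by
    have h3 : ∀ z : ℤ, (z + 1 + 1 - (z - 1)).toNat = 3 := fun z => by omega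
    simp [Z, Fintype.card_piFinset, Int.card_Icc, h3]
  rw [← Finset.sum_fiberwise_of_maps_to hmaps]
  calc _ ≤ Z.card • (A * cubeVol d k) := Finset.sum_le_card_nsmul _ _ _ fun z _ => ?_
    _ = _ := by rw [hcard, nsmul_eq_mul, Nat.cast_pow, Nat.cast_ofNat]
  refine (Finset.sum_le_sum_of_subset_of_nonneg ?_ fun I _ _ => hc I).trans (hmass (k, z))
  intro I hI
  simp only [Finset.mem_filter] at hI ⊢
  obtain ⟨⟨hIS, hIk, -⟩, rfl⟩ := hI
  exact ⟨hIS, hIk, dyadic_subset_dyadicAncestor (by omega)⟩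

lemma sum_sum_mul_measureReal_expand_inter_le (hc : ∀ I, 0 ≤ c I)
    (hmass : ∀ Q : CubeIdx d,
      ∑ I ∈ S with I.1 + (t I : ℤ) ≤ Q.1 ∧ dyadic d I ⊆ dyadic d Q, c I ≤ A * cubeVol d Q.1) :
    ∑ I ∈ S, ∑ I' ∈ S, c I / cubeVol d (I.1 + t I) * (c I' / cubeVol d (I'.1 + t I')) *
        volume.real (expand d I (t I) ∩ expand d I' (t I'))
      ≤ 2 * 3 ^ d * A * ∑ I ∈ S, c I := by
  set v := fun I : CubeIdx d => cubeVol d (I.1 + t I)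
  set E := fun I : CubeIdx d => expand d I (t I)
  have hv : ∀ I, 0 < v I := fun I => cubeVol_pos d _
  set p := fun I I' => c I / v I * (c I' / v I') * volume.real (E I ∩ E I')
  have hp : ∀ I I', 0 ≤ p I I' := fun I I' => by
    have := hc I; have := hc I'; have := hv I; have := hv I'
    positivity
  have hpE : ∀ I I', p I I' ≤ c I / v I * c I' := fun I I' => by
    have hEI' : volume.real (E I ∩ E I') ≤ v I' :=
      (measureReal_mono inter_subset_right (volume_expand_ne_top I' _)).trans_eq
        (measureReal_expand I' _)
    have := hc I; have := hc I'; have := hv I; have := hv I'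
    calc p I I' = c I / v I * (c I' / v I') * volume.real (E I ∩ E I') := rfl
      _ ≤ c I / v I * (c I' / v I') * v I' := by gcongr
      _ = c I / v I * c I' := by rw [mul_assoc, div_mul_cancel₀ _ (hv I').ne']
  have hrow : ∀ I, ∑ I' ∈ S with I'.1 + (t I' : ℤ) ≤ I.1 + t I, p I I' ≤ c I * (3 ^ d * A) :=
    fun I => calc
      _ = ∑ I' ∈ S with I'.1 + (t I' : ℤ) ≤ I.1 + t I ∧ (E I' ∩ E I).Nonempty, p I I' := by
        rw [← Finset.filter_filter]
        refine (Finset.sum_filter_of_ne fun I' _ hne => ?_).symm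
        by_contra hempty
        rw [not_nonempty_iff_eq_empty, inter_comm] at hempty
        simp [p, hempty] at hne
      _ ≤ ∑ I' ∈ S with I'.1 + (t I' : ℤ) ≤ I.1 + t I ∧ (E I' ∩ E I).Nonempty,
          c I / v I * c I' := Finset.sum_le_sum fun I' _ => hpE I I'
      _ = c I / v I * ∑ I' ∈ S with I'.1 + (t I' : ℤ) ≤ I.1 + t I ∧ (E I' ∩ E I).Nonempty,
          c I' := (Finset.mul_sum ..).symm
      _ ≤ c I / v I * (3 ^ d * (A * v I)) := by
        have := hc I; have := hv I
        gcongr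
        exact sum_coeff_expand_meets_le hc hmass I
      _ = c I * (3 ^ d * A) := by field_simp [(hv I).ne']
  calc _ ≤ 2 * ∑ I ∈ S, ∑ I' ∈ S with I'.1 + (t I' : ℤ) ≤ I.1 + t I, p I I' :=
        sum_sum_le_two_mul_sum_sum_filter_le S (fun I => I.1 + (t I : ℤ)) hp
          fun I I' => by simp only [p, inter_comm]; ring
    _ ≤ 2 * ∑ I ∈ S, c I * (3 ^ d * A) := by gcongr with I; exact hrow I
    _ = _ := by rw [← Finset.sum_mul]; ring

end StoppingTimes

theorem statement15_general (d : ℕ) (C₁ : ℝ) :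
    ∃ C : ℝ, 0 < C ∧
      ∀ (α : ℝ), 0 < α →
      ∀ (S : Finset (CubeIdx d)) (c : CubeIdx d → ℝ), (∀ I, 0 ≤ c I) →
        (∑ I ∈ S, c I) ≤ 1 →
      -- the Calderón–Zygmund cubes 𝒥 at height α for F = ∑ c_I χ_I / |I| :
      ∀ (𝒥 : Finset (CubeIdx d)),
        (∀ J ∈ 𝒥, ∀ J' ∈ 𝒥, J ≠ J' → Disjoint (dyadic d J) (dyadic d J')) →
        (∑ J ∈ 𝒥, cubeVol d J.1 ≤ C₁ * α) →
        (∀ J ∈ 𝒥, ∫ x in dyadic d J,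
            (∑ I ∈ S, c I * (dyadic d I).indicator (fun _ => 1) x / cubeVol d I.1)
          ≤ C₁ * α * cubeVol d J.1) →
        (∀ Q : CubeIdx d, (¬ ∃ J ∈ 𝒥, dyadic d Q ⊆ dyadic d J) →
          ∫ x in dyadic d Q,
            (∑ I ∈ S, c I * (dyadic d I).indicator (fun _ => 1) x / cubeVol d I.1)
          ≤ α * cubeVol d Q.1) →
        (∀ᵐ x : Rd d, x ∉ ⋃ J ∈ 𝒥, dyadic d J →
          (∑ I ∈ S, c I * (dyadic d I).indicator (fun _ => 1) x / cubeVol d I.1) ≤ C₁ * α) →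
      -- the stopping times t_I :
      ∀ t : CubeIdx d → ℕ,
        (∀ I, (¬ ∃ J ∈ 𝒥, dyadic d I ⊆ dyadic d J) → t I = 0) →
        (∀ I, ∀ J ∈ 𝒥, dyadic d I ⊆ dyadic d J → J.1 = I.1 + (t I : ℤ)) →
      eLpNorm (fun x : Rd d =>
          ∑ I ∈ S, c I * (expand d I (t I)).indicator (fun _ => 1) x
            / cubeVol d (I.1 + (t I : ℤ))) 2 volume
        ≤ ENNReal.ofReal (C * Real.sqrt α) := by
  refine ⟨√(2 * 3 ^ d * max 1 C₁), by positivity, ?_⟩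
  intro α hα S c hc hsum 𝒥 _ _ hJ hgood _ t _ ht
  have hmass := sum_coeff_le_of_stoppingTimes hα.le hc hJ hgood ht
  simp_rw [mul_indicator_one_div]
  rw [eLpNorm_two_sum_indicator S (fun I => measurableSet_expand I (t I))
    (fun I => volume_expand_ne_top I (t I)), ← Real.sqrt_mul (by positivity)]
  gcongr
  calc _ ≤ 2 * 3 ^ d * (max 1 C₁ * α) * ∑ I ∈ S, c I :=
        sum_sum_mul_measureReal_expand_inter_le hc hmass
    _ ≤ 2 * 3 ^ d * (max 1 C₁ * α) * 1 := by gcongr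
    _ = _ := by ring

/-- **Lemma 7.2.** With the stopping times `t_I` produced by the Calderón–Zygmund
decomposition of `F = ∑_I c_I χ_I/|I|` at height `α`, one has
`‖∑_I c_I χ_{2^{t_I}I}/|2^{t_I}I|‖₂ ≲ α^{1/2}`. -/
theorem statement15 (d : ℕ) (hd : 1 ≤ d) (C₁ : ℝ) (hC₁ : 0 < C₁) :
    ∃ C : ℝ, 0 < C ∧
      ∀ (α : ℝ), 0 < α →
      ∀ (S : Finset (CubeIdx d)) (c : CubeIdx d → ℝ), (∀ I, 0 ≤ c I) →
        (∑ I ∈ S, c I) ≤ 1 →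
      -- the Calderón–Zygmund cubes 𝒥 at height α for F = ∑ c_I χ_I / |I| :
      ∀ (𝒥 : Finset (CubeIdx d)),
        (∀ J ∈ 𝒥, ∀ J' ∈ 𝒥, J ≠ J' → Disjoint (dyadic d J) (dyadic d J')) →
        (∑ J ∈ 𝒥, cubeVol d J.1 ≤ C₁ * α) →
        (∀ J ∈ 𝒥, ∫ x in dyadic d J,
            (∑ I ∈ S, c I * (dyadic d I).indicator (fun _ => 1) x / cubeVol d I.1)
          ≤ C₁ * α * cubeVol d J.1) →
        (∀ Q : CubeIdx d, (¬ ∃ J ∈ 𝒥, dyadic d Q ⊆ dyadic d J) →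
          ∫ x in dyadic d Q,
            (∑ I ∈ S, c I * (dyadic d I).indicator (fun _ => 1) x / cubeVol d I.1)
          ≤ α * cubeVol d Q.1) →
        (∀ᵐ x : Rd d, x ∉ ⋃ J ∈ 𝒥, dyadic d J →
          (∑ I ∈ S, c I * (dyadic d I).indicator (fun _ => 1) x / cubeVol d I.1) ≤ C₁ * α) →
      -- the stopping times t_I :
      ∀ t : CubeIdx d → ℕ,
        (∀ I, (¬ ∃ J ∈ 𝒥, dyadic d I ⊆ dyadic d J) → t I = 0) →
        (∀ I, ∀ J ∈ 𝒥, dyadic d I ⊆ dyadic d J → J.1 = I.1 + (t I : ℤ)) →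
      eLpNorm (fun x : Rd d =>
          ∑ I ∈ S, c I * (expand d I (t I)).indicator (fun _ => 1) x
            / cubeVol d (I.1 + (t I : ℤ))) 2 volume
        ≤ ENNReal.ofReal (C * Real.sqrt α) :=
  statement15_general d C₁
end
end
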